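/- Every two-sided ideal of the free associative algebra k⟨X⟩ over a finite alphabet X, with respect to a fixed admissible order on the free monoid X*, admits a unique reduced Gröbner basis, and this reduced Gröbner basis generates the ideal. -/

import Mathlib

namespace NC

/-- The free associative algebra on the alphabet `X`, with the words (the free
monoid on `X`) as a basis. -/
abbrev FA (k X : Type) [Field k] := MonoidAlgebra k (FreeMonoid X)

variable {k X : Type} [Field k]

/-- The monomial on a word `u` (with coefficient `1`). -/
noncomputable def mono (k : Type) [Field k] {X : Type} (u : FreeMonoid X) : FA k X :=
  MonoidAlgebra.of k (FreeMonoid X) u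

/-- `u` is a factor of `v`. -/
def IsFactor (u v : FreeMonoid X) : Prop := ∃ w₁ w₂ : FreeMonoid X, w₁ * u * w₂ = v

/-- The leading word of a polynomial (junk value `1` for the zero polynomial). -/
noncomputable def lw [LinearOrder (FreeMonoid X)] (f : FA k X) : FreeMonoid X :=
  f.coeff.support.max.unbotD 1

/-- The set of leading words of the nonzero members of `G`. -/
def lwSet [LinearOrder (FreeMonoid X)] (G : Set (FA k X)) : Set (FreeMonoid X) :=
  {u | ∃ f ∈ G, f ≠ 0 ∧ lw f = u}

/-- The normal words modulo `G` : words having no factor among the leading words of `G`. -/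
def nw [LinearOrder (FreeMonoid X)] (G : Set (FA k X)) : Set (FreeMonoid X) :=
  {u | ∀ v ∈ lwSet G, ¬ IsFactor v u}

/-- The two-sided ideal (as a `k`-submodule) generated by a set `S`. -/
noncomputable def ideal2 (k : Type) [Field k] {X : Type} (S : Set (FA k X)) : Submodule k (FA k X) :=
  Submodule.span k {x | ∃ a s b, s ∈ S ∧ x = a * s * b}

/-- A `k`-submodule of the free algebra which is a two-sided ideal. -/
def IsTwoSided (𝔞 : Submodule k (FA k X)) : Prop :=
  ∀ a x : FA k X, x ∈ 𝔞 → a * x ∈ 𝔞 ∧ x * a ∈ 𝔞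

/-- `G` is a Gröbner basis of the (two-sided) ideal `𝔞`. -/
def IsGrobner [LinearOrder (FreeMonoid X)] (𝔞 : Submodule k (FA k X))
    (G : Set (FA k X)) : Prop :=
  (∀ g ∈ G, g ∈ 𝔞) ∧ ∀ f ∈ 𝔞, f ≠ 0 → lw f ∉ nw G

/-- `G` is reduced: every member is monic and normal modulo the remaining members. -/
def IsReducedGB [LinearOrder (FreeMonoid X)] (G : Set (FA k X)) : Prop :=
  ∀ f ∈ G, f.coeff (lw f) = 1 ∧ ∀ u ∈ f.coeff.support, u ∈ nw (G \ {f})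

/-- The fixed linear order on words is admissible. -/
def IsAdmissible (X : Type) [LinearOrder (FreeMonoid X)] : Prop :=
  WellFoundedLT (FreeMonoid X) ∧ (∀ u : FreeMonoid X, u ≠ 1 → 1 < u) ∧
    ∀ u v w₁ w₂ : FreeMonoid X, u < v → w₁ * u * w₂ < w₁ * v * w₂

end NC

/-! The reduced Gröbner basis of `𝔞` consists of the polynomials `u - NF(u)`, where `u` runs over
the words that are minimal for the factor order among the leading words of `𝔞`, and `NF(u)` is a
combination of words normal modulo `𝔞` congruent to `u`. Such normal forms exist by the division
algorithm (well-founded induction along the admissible order) and are unique, since a nonzero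
element of `𝔞` has a non-normal leading word. In a reduced Gröbner basis `G`, the only leading word
of `𝔞` that can divide a word of `g ∈ G` is `lw g`, dividing itself, which forces
`g = lw g - NF(lw g)`. Dividing an element of `𝔞` by a Gröbner basis leaves remainder zero, so every
Gröbner basis generates `𝔞`. -/

namespace NC

variable {k X : Type} [Field k]

section Factor

variable {u v w : FreeMonoid X}

lemma IsFactor.refl (u : FreeMonoid X) : IsFactor u u := ⟨1, 1, by simp⟩

lemma IsFactor.trans (huv : IsFactor u v) (hvw : IsFactor v w) : IsFactor u w := by
  obtain ⟨a, b, rfl⟩ := huv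
  obtain ⟨c, d, rfl⟩ := hvw
  exact ⟨c * a, b * d, by simp only [mul_assoc]⟩

lemma IsFactor.length_le (h : IsFactor u v) : u.length ≤ v.length := by
  obtain ⟨a, b, rfl⟩ := h
  simp only [FreeMonoid.length_mul]
  omega

lemma IsFactor.eq_of_length_le (h : IsFactor u v) (hle : v.length ≤ u.length) : u = v := by
  obtain ⟨a, b, rfl⟩ := h
  simp only [FreeMonoid.length_mul] at hle
  rw [FreeMonoid.length_eq_zero.1 (by omega : a.length = 0),
    FreeMonoid.length_eq_zero.1 (by omega : b.length = 0), one_mul, mul_one]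

lemma IsFactor.antisymm (huv : IsFactor u v) (hvu : IsFactor v u) : u = v :=
  huv.eq_of_length_le hvu.length_le

def IsFactorMinimal (S : Set (FreeMonoid X)) (u : FreeMonoid X) : Prop :=
  u ∈ S ∧ ∀ v ∈ S, IsFactor v u → v = u

lemma exists_isFactorMinimal_isFactor {S : Set (FreeMonoid X)} (hu : u ∈ S) :
    ∃ v, IsFactorMinimal S v ∧ IsFactor v u := by
  obtain ⟨v, ⟨hvS, hvu⟩, hmin⟩ := (measure FreeMonoid.length).wf.has_min
    {v | v ∈ S ∧ IsFactor v u} ⟨u, hu, .refl u⟩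
  exact ⟨v, ⟨hvS, fun w hwS hwv =>
    hwv.eq_of_length_le (not_lt.1 (hmin w ⟨hwS, hwv.trans hvu⟩))⟩, hvu⟩

end Factor

lemma mono_eq_single (u : FreeMonoid X) : mono k u = MonoidAlgebra.single u 1 :=
  MonoidAlgebra.of_apply k (FreeMonoid X) u

lemma support_coeff_nonempty {f : FA k X} (hf : f ≠ 0) : f.coeff.support.Nonempty :=
  Finsupp.support_nonempty_iff.2 (MonoidAlgebra.coeff_eq_zero.not.2 hf)

lemma coeff_mono_mul_mul_mono (a b : FreeMonoid X) (f : FA k X) :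
    (mono k a * f * mono k b).coeff = Finsupp.mapDomain (fun v => a * v * b) f.coeff := by
  induction f using MonoidAlgebra.induction_linear with
  | zero => simp
  | add f g hf hg => rw [mul_add, add_mul, MonoidAlgebra.coeff_add, hf, hg,
      MonoidAlgebra.coeff_add, Finsupp.mapDomain_add]
  | single v c => simp [mono_eq_single, MonoidAlgebra.single_mul_single]

lemma mul_mul_injective (a b : FreeMonoid X) : Function.Injective (fun v => a * v * b) :=
  fun _ _ h => mul_left_cancel (mul_right_cancel h)

lemma coeff_mono_mul_mul_mono_apply (a b v : FreeMonoid X) (f : FA k X) :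
    (mono k a * f * mono k b).coeff (a * v * b) = f.coeff v := by
  rw [coeff_mono_mul_mul_mono]
  exact Finsupp.mapDomain_apply (mul_mul_injective a b) f.coeff v

lemma support_coeff_mono_mul_mul_mono [DecidableEq (FreeMonoid X)] (a b : FreeMonoid X)
    (f : FA k X) :
    (mono k a * f * mono k b).coeff.support = f.coeff.support.image (fun v => a * v * b) := by
  rw [coeff_mono_mul_mul_mono]
  exact Finsupp.mapDomain_support_of_injective (mul_mul_injective a b) f.coeff

lemma ideal2_le {𝔞 : Submodule k (FA k X)} {G : Set (FA k X)} (h𝔞 : IsTwoSided 𝔞)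
    (hG : ∀ g ∈ G, g ∈ 𝔞) : ideal2 k G ≤ 𝔞 := by
  rw [ideal2, Submodule.span_le]
  rintro _ ⟨a, g, b, hg, rfl⟩
  exact (h𝔞 b _ (h𝔞 a g (hG g hg)).1).2

variable [LinearOrder (FreeMonoid X)]

section LeadingWord

variable {f : FA k X} {u : FreeMonoid X}

lemma lw_eq_max' (hf : f ≠ 0) : lw f = f.coeff.support.max' (support_coeff_nonempty hf) := by
  rw [lw, ← Finset.coe_max' (support_coeff_nonempty hf)]
  rfl

lemma lw_mem_support (hf : f ≠ 0) : lw f ∈ f.coeff.support := by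
  rw [lw_eq_max' hf]
  exact Finset.max'_mem _ _

lemma le_lw (hu : u ∈ f.coeff.support) : u ≤ lw f := by
  have hf : f ≠ 0 := by rintro rfl; simp at hu
  rw [lw_eq_max' hf]
  exact Finset.le_max' _ _ hu

lemma coeff_lw_ne_zero (hf : f ≠ 0) : f.coeff (lw f) ≠ 0 :=
  Finsupp.mem_support_iff.1 (lw_mem_support hf)

lemma lw_eq_of_mem_support (hu : u ∈ f.coeff.support) (hle : ∀ w ∈ f.coeff.support, w ≤ u) :
    lw f = u :=
  le_antisymm (hle _ (lw_mem_support (by rintro rfl; simp at hu))) (le_lw hu)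

lemma lw_smul {c : k} (hc : c ≠ 0) (f : FA k X) : lw (c • f) = lw f := by
  simp only [lw, MonoidAlgebra.coeff_smul, Finsupp.support_smul_eq hc]

end LeadingWord

namespace IsAdmissible

variable (hadm : IsAdmissible X) {u v : FreeMonoid X}
include hadm

lemma one_le (u : FreeMonoid X) : 1 ≤ u := by
  rcases eq_or_ne u 1 with rfl | hu
  · exact le_rfl
  · exact (hadm.2.1 u hu).le

lemma mul_mul_le_mul_mul (a b : FreeMonoid X) (h : u ≤ v) : a * u * b ≤ a * v * b := by
  rcases h.eq_or_lt with rfl | h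
  · exact le_rfl
  · exact (hadm.2.2 u v a b h).le

lemma le_of_isFactor (h : IsFactor u v) : u ≤ v := by
  obtain ⟨a, b, rfl⟩ := h
  calc u = 1 * 1 * u := by simp
    _ ≤ 1 * a * u := hadm.mul_mul_le_mul_mul 1 u (hadm.one_le a)
    _ = a * u * 1 := by simp
    _ ≤ a * u * b := by simpa using hadm.mul_mul_le_mul_mul (a * u) 1 (hadm.one_le b)

lemma lw_mono_mul_mul_mono {f : FA k X} (hf : f ≠ 0) (a b : FreeMonoid X) :
    lw (mono k a * f * mono k b) = a * lw f * b := by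
  classical
  apply lw_eq_of_mem_support
  · rw [support_coeff_mono_mul_mul_mono]
    exact Finset.mem_image_of_mem _ (lw_mem_support hf)
  · intro w hw
    rw [support_coeff_mono_mul_mul_mono] at hw
    obtain ⟨v, hv, rfl⟩ := Finset.mem_image.1 hw
    exact hadm.mul_mul_le_mul_mul a b (le_lw hv)

end IsAdmissible

section Normal

variable {G : Set (FA k X)} {u : FreeMonoid X}

lemma notMem_nw_iff : u ∉ nw G ↔ ∃ g ∈ G, g ≠ 0 ∧ IsFactor (lw g) u := by
  simp [nw, lwSet]

lemma notMem_nw_of_mem_lwSet (hu : u ∈ lwSet G) : u ∉ nw G :=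
  fun h => h u hu (.refl u)

lemma sub_mono_mem_supported_iff {s : Set (FreeMonoid X)} {g : FA k X} (hu : u ∉ s) :
    g - mono k u ∈ MonoidAlgebra.supported k k s ↔
      g.coeff u = 1 ∧ ∀ w ∈ g.coeff.support, w ≠ u → w ∈ s := by
  classical
  simp only [MonoidAlgebra.mem_supported', mono_eq_single, MonoidAlgebra.coeff_sub,
    MonoidAlgebra.coeff_single, Finsupp.sub_apply, Finsupp.single_apply, Finsupp.mem_support_iff,
    sub_eq_zero]
  constructor
  · intro h
    refine ⟨by simpa using h u hu, fun w hw hwu => by_contra fun hws => hw ?_⟩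
    simpa [Ne.symm hwu] using h w hws
  · rintro ⟨hu1, hs⟩ w hws
    by_cases hwu : u = w
    · simp [← hwu, hu1]
    · simpa [hwu] using not_imp_comm.1 (fun h => hs w h (Ne.symm hwu)) hws

end Normal

lemma IsAdmissible.exists_mem_ideal2_lw_eq (hadm : IsAdmissible X) {G : Set (FA k X)}
    {u : FreeMonoid X} (hu : u ∉ nw G) : ∃ q ∈ ideal2 k G, lw q = u ∧ q.coeff u = 1 := by
  obtain ⟨g, hg, hg0, a, b, rfl⟩ := notMem_nw_iff.1 hu
  have hc := coeff_lw_ne_zero hg0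
  refine ⟨(g.coeff (lw g))⁻¹ • (mono k a * g * mono k b),
    Submodule.smul_mem _ _ (Submodule.subset_span ⟨mono k a, g, mono k b, hg, rfl⟩), ?_, ?_⟩
  · rw [lw_smul (inv_ne_zero hc), hadm.lw_mono_mul_mul_mono hg0]
  · rw [MonoidAlgebra.coeff_smul, Finsupp.smul_apply, coeff_mono_mul_mul_mono_apply, smul_eq_mul,
      inv_mul_cancel₀ hc]

/-- The division algorithm: every polynomial is congruent modulo `ideal2 k G` to a combination
of words that are normal modulo `G`. -/
theorem IsAdmissible.ideal2_sup_supported_nw_eq_top (hadm : IsAdmissible X)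
    (G : Set (FA k X)) : ideal2 k G ⊔ MonoidAlgebra.supported k k (nw G) = ⊤ := by
  set N := ideal2 k G ⊔ MonoidAlgebra.supported k k (nw G)
  have supported_le {s : Set (FreeMonoid X)} (hs : ∀ u ∈ s, mono k u ∈ N) :
      MonoidAlgebra.supported k k s ≤ N := by
    rw [MonoidAlgebra.supported_eq_span_single, Submodule.span_le]
    rintro _ ⟨u, hu, rfl⟩
    simpa [mono_eq_single] using hs u hu
  have mono_mem (u : FreeMonoid X) : mono k u ∈ N := by
    induction u using hadm.1.wf.induction with | _ u ih => ?_
    by_cases hu : u ∈ nw G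
    · refine Submodule.mem_sup_right (MonoidAlgebra.mem_supported.2 ?_)
      simpa [mono_eq_single, Finsupp.support_single] using hu
    obtain ⟨q, hq, hlw, hcoeff⟩ := hadm.exists_mem_ideal2_lw_eq hu
    have hlower : q - mono k u ∈ MonoidAlgebra.supported k k (Set.Iio u) :=
      (sub_mono_mem_supported_iff Set.self_notMem_Iio).2
        ⟨hcoeff, fun w hw hwu => ((le_lw hw).trans_eq hlw).lt_of_ne hwu⟩
    simpa using N.sub_mem (Submodule.mem_sup_left hq) (supported_le ih hlower)
  exact eq_top_iff.2 fun f _ => by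
    simpa using supported_le (s := Set.univ) (fun u _ => mono_mem u)
      (MonoidAlgebra.mem_supported.2 (Set.subset_univ _) : f ∈ _)

section Grobner

variable {𝔞 : Submodule k (FA k X)} {G : Set (FA k X)}

lemma isGrobner_self : IsGrobner 𝔞 (𝔞 : Set (FA k X)) :=
  ⟨fun _ h => h, fun f hf hf0 => notMem_nw_of_mem_lwSet ⟨f, hf, hf0, rfl⟩⟩

lemma IsGrobner.eq_zero_of_mem_supported (hG : IsGrobner 𝔞 G) {f : FA k X} (hf : f ∈ 𝔞)
    (hs : f ∈ MonoidAlgebra.supported k k (nw G)) : f = 0 := by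
  by_contra hf0
  exact hG.2 f hf hf0 (hs (lw_mem_support hf0))

lemma IsGrobner.exists_isFactor (hG : IsGrobner 𝔞 G) {v : FreeMonoid X}
    (hv : v ∈ lwSet (𝔞 : Set (FA k X))) : ∃ g ∈ G, g ≠ 0 ∧ IsFactor (lw g) v := by
  obtain ⟨f, hf, hf0, rfl⟩ := hv
  exact notMem_nw_iff.1 (hG.2 f hf hf0)

theorem IsAdmissible.ideal2_eq_of_isGrobner (hadm : IsAdmissible X) (h𝔞 : IsTwoSided 𝔞)
    (hG : IsGrobner 𝔞 G) : ideal2 k G = 𝔞 := by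
  refine le_antisymm (ideal2_le h𝔞 hG.1) fun f hf => ?_
  obtain ⟨y, hy, z, hz, rfl⟩ := Submodule.mem_sup.1
    (show f ∈ _ from hadm.ideal2_sup_supported_nw_eq_top G ▸ Submodule.mem_top)
  have hz𝔞 : z ∈ 𝔞 := by simpa using 𝔞.sub_mem hf (ideal2_le h𝔞 hG.1 hy)
  simpa [hG.eq_zero_of_mem_supported hz𝔞 hz] using hy

/-- `g = u - NF(u)` with `NF(u)` the normal form of `u` modulo `𝔞`; for `u` not normal this is
the element of the reduced Gröbner basis with leading word `u`. -/
def IsReducedAt (𝔞 : Submodule k (FA k X)) (u : FreeMonoid X) (g : FA k X) : Prop :=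
  g ∈ 𝔞 ∧ g - mono k u ∈ MonoidAlgebra.supported k k (nw (𝔞 : Set (FA k X)))

lemma IsAdmissible.exists_isReducedAt (hadm : IsAdmissible X) (h𝔞 : IsTwoSided 𝔞)
    (u : FreeMonoid X) : ∃ g, IsReducedAt 𝔞 u g := by
  obtain ⟨y, hy, z, hz, hyz⟩ := Submodule.mem_sup.1
    (show mono k u ∈ _ from hadm.ideal2_sup_supported_nw_eq_top (𝔞 : Set (FA k X)) ▸
      Submodule.mem_top)
  refine ⟨y, ideal2_le h𝔞 (fun _ h => h) hy, ?_⟩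
  simpa [← hyz] using Submodule.neg_mem _ hz

namespace IsReducedAt

variable {u : FreeMonoid X} {g g' : FA k X}

lemma unique (hg : IsReducedAt 𝔞 u g) (hg' : IsReducedAt 𝔞 u g') : g = g' := by
  rw [← sub_eq_zero]
  refine isGrobner_self.eq_zero_of_mem_supported (𝔞.sub_mem hg.1 hg'.1) ?_
  simpa using Submodule.sub_mem _ hg.2 hg'.2

variable (hu : u ∉ nw (𝔞 : Set (FA k X)))
include hu

lemma coeff_eq_one (hg : IsReducedAt 𝔞 u g) : g.coeff u = 1 :=
  ((sub_mono_mem_supported_iff hu).1 hg.2).1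

lemma mem_nw (hg : IsReducedAt 𝔞 u g) {w : FreeMonoid X} (hw : w ∈ g.coeff.support)
    (hwu : w ≠ u) : w ∈ nw (𝔞 : Set (FA k X)) :=
  ((sub_mono_mem_supported_iff hu).1 hg.2).2 w hw hwu

lemma ne_zero (hg : IsReducedAt 𝔞 u g) : g ≠ 0 := by
  rintro rfl
  simpa using hg.coeff_eq_one hu

lemma lw_eq (hg : IsReducedAt 𝔞 u g) : lw g = u := by
  have hg0 := hg.ne_zero hu
  by_contra hne
  exact isGrobner_self.2 g hg.1 hg0 (hg.mem_nw hu (lw_mem_support hg0) hne)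

end IsReducedAt

lemma isReducedAt_iff {u : FreeMonoid X} {g : FA k X} (hu : u ∉ nw (𝔞 : Set (FA k X))) :
    IsReducedAt 𝔞 u g ↔
      g ∈ 𝔞 ∧ g.coeff u = 1 ∧ ∀ w ∈ g.coeff.support, w ≠ u → w ∈ nw (𝔞 : Set (FA k X)) :=
  and_congr_right fun _ => sub_mono_mem_supported_iff hu

def reducedGB (𝔞 : Submodule k (FA k X)) : Set (FA k X) :=
  {g | ∃ u, IsFactorMinimal (lwSet (𝔞 : Set (FA k X))) u ∧ IsReducedAt 𝔞 u g}

theorem IsAdmissible.isGrobner_reducedGB (hadm : IsAdmissible X) (h𝔞 : IsTwoSided 𝔞) :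
    IsGrobner 𝔞 (reducedGB 𝔞) := by
  refine ⟨fun g ⟨_, _, hg⟩ => hg.1, fun f hf hf0 hnw => ?_⟩
  obtain ⟨v, hv, hvf⟩ := exists_isFactorMinimal_isFactor (S := lwSet (𝔞 : Set (FA k X)))
    ⟨f, hf, hf0, rfl⟩
  obtain ⟨g, hg⟩ := hadm.exists_isReducedAt h𝔞 v
  have hv' := notMem_nw_of_mem_lwSet hv.1
  exact hnw v ⟨g, ⟨v, hv, hg⟩, hg.ne_zero hv', hg.lw_eq hv'⟩ hvf

theorem isReducedGB_reducedGB : IsReducedGB (reducedGB 𝔞) := by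
  rintro g ⟨u, hu, hg⟩
  have hu' := notMem_nw_of_mem_lwSet hu.1
  rw [hg.lw_eq hu']
  refine ⟨hg.coeff_eq_one hu', fun w hw => ?_⟩
  rintro _ ⟨g', ⟨⟨u', hu'min, hg'⟩, hne⟩, -, rfl⟩ hfac
  rw [hg'.lw_eq (notMem_nw_of_mem_lwSet hu'min.1)] at hfac
  by_cases hwu : w = u
  · subst hwu
    obtain rfl := hu.2 u' hu'min.1 hfac
    exact hne (hg'.unique hg)
  · exact hg.mem_nw hu' hw hwu u' hu'min.1 hfac

namespace IsReducedGB

variable (hadm : IsAdmissible X) (hG : IsGrobner 𝔞 G) (hred : IsReducedGB G)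
include hadm hG hred

lemma eq_lw_of_isFactor {g : FA k X} (hg : g ∈ G) {v w : FreeMonoid X}
    (hw : w ∈ g.coeff.support) (hv : v ∈ lwSet (𝔞 : Set (FA k X))) (hvw : IsFactor v w) :
    v = lw g ∧ w = lw g := by
  obtain ⟨g', hg', hg'0, hg'v⟩ := hG.exists_isFactor hv
  have hg'g : g' = g := by
    by_contra hne
    exact (hred g hg).2 w hw (lw g') ⟨g', ⟨hg', hne⟩, hg'0, rfl⟩ (hg'v.trans hvw)
  subst hg'g
  have hwg : w = lw g' := le_antisymm (le_lw hw) (hadm.le_of_isFactor (hg'v.trans hvw))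
  subst hwg
  exact ⟨hvw.antisymm hg'v, rfl⟩

lemma isFactorMinimal_lw_and_isReducedAt {g : FA k X} (hg : g ∈ G) :
    IsFactorMinimal (lwSet (𝔞 : Set (FA k X))) (lw g) ∧ IsReducedAt 𝔞 (lw g) g := by
  have hg0 : g ≠ 0 := by
    rintro rfl
    simpa using (hred 0 hg).1
  have hlw : lw g ∈ lwSet (𝔞 : Set (FA k X)) := ⟨g, hG.1 g hg, hg0, rfl⟩
  refine ⟨⟨hlw, fun v hv hvg => ?_⟩, (isReducedAt_iff (notMem_nw_of_mem_lwSet hlw)).2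
    ⟨hG.1 g hg, (hred g hg).1, fun w hw hne v hv hvw => hne ?_⟩⟩
  · exact (eq_lw_of_isFactor hadm hG hred hg (lw_mem_support hg0) hv hvg).1
  · exact (eq_lw_of_isFactor hadm hG hred hg hw hv hvw).2

theorem eq_reducedGB : G = reducedGB 𝔞 := by
  refine Set.Subset.antisymm
    (fun g hg => ⟨lw g, isFactorMinimal_lw_and_isReducedAt hadm hG hred hg⟩) ?_
  rintro g ⟨u, hu, hg⟩
  obtain ⟨g', hg', -, hg'u⟩ := hG.exists_isFactor hu.1
  obtain ⟨hmin, hg'red⟩ := isFactorMinimal_lw_and_isReducedAt hadm hG hred hg'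
  obtain rfl := hu.2 _ hmin.1 hg'u
  exact hg.unique hg'red ▸ hg'

end IsReducedGB

end Grobner

end NC

theorem stmt_1_general (k X : Type) [Field k] [LinearOrder (FreeMonoid X)]
    (hadm : NC.IsAdmissible X)
    (𝔞 : Submodule k (NC.FA k X)) (h𝔞 : NC.IsTwoSided 𝔞) :
    (∃! G : Set (NC.FA k X), NC.IsGrobner 𝔞 G ∧ NC.IsReducedGB G) ∧
    ∀ G : Set (NC.FA k X), NC.IsGrobner 𝔞 G → NC.IsReducedGB G →
      NC.ideal2 k G = 𝔞 :=
  ⟨⟨NC.reducedGB 𝔞, ⟨hadm.isGrobner_reducedGB h𝔞, NC.isReducedGB_reducedGB⟩,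
      fun _ ⟨hG, hred⟩ => hred.eq_reducedGB hadm hG⟩,
    fun _ hG _ => hadm.ideal2_eq_of_isGrobner h𝔞 hG⟩

/-- Every two-sided ideal of the free algebra `k⟨X⟩` over a finite
alphabet, with respect to a fixed admissible order on the words, admits a unique
reduced Gröbner basis, and this reduced Gröbner basis generates the ideal. -/
theorem stmt_1 (k X : Type) [Field k] [Finite X] [LinearOrder (FreeMonoid X)]
    (hadm : NC.IsAdmissible X)
    (𝔞 : Submodule k (NC.FA k X)) (h𝔞 : NC.IsTwoSided 𝔞) :
    (∃! G : Set (NC.FA k X), NC.IsGrobner 𝔞 G ∧ NC.IsReducedGB G) ∧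
    ∀ G : Set (NC.FA k X), NC.IsGrobner 𝔞 G → NC.IsReducedGB G →
      NC.ideal2 k G = 𝔞 :=
  stmt_1_general k X hadm 𝔞 h𝔞
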